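/- arXiv:1709.00606 — 7 statements merged into one kernel-verified Lean document; each statement's English description precedes it below -/
import Mathlib

section
/- For every finite set A of integers there exist a natural number n and real numbers x₁ ≤ y₁ < x₂ ≤ y₂ < ... < xₙ ≤ yₙ such that the set 𝒜 = ⋃_{i=1}^{n} [xᵢ, yᵢ] ⊆ ℝ, a finite union of pairwise disjoint closed intervals, satisfies μ(𝒜 + 𝒜) = |A + A| and μ(𝒜 − 𝒜) = |A − A|. -/
open MeasureTheory
open scoped Pointwise ENNReal

lemma Icc_sub_Icc' {a b c d : ℝ} (hab : a ≤ b) (hcd : c ≤ d) :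
    Set.Icc a b - Set.Icc c d = Set.Icc (a - d) (b - c) := by
  rw [sub_eq_add_neg, Set.neg_Icc, Set.Icc_add_Icc hab (neg_le_neg hcd),
    ← sub_eq_add_neg, ← sub_eq_add_neg]

/-- Volume of a finite union of unit intervals at integer translates. -/
lemma vol_biUnion_unit (F : Finset ℤ) (c : ℝ) :
    volume (⋃ s ∈ F, Set.Icc ((s : ℝ) + c) ((s : ℝ) + c + 1)) = (F.card : ℝ≥0∞) := by
  have hsplit : ∀ s : ℤ, Set.Icc ((s : ℝ) + c) ((s : ℝ) + c + 1)
      = Set.Ico ((s : ℝ) + c) ((s : ℝ) + c + 1) ∪ {(s : ℝ) + c + 1} :=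
    fun s => (Set.Ico_union_right (by linarith)).symm
  have h1 : (⋃ s ∈ F, Set.Icc ((s : ℝ) + c) ((s : ℝ) + c + 1))
      = (⋃ s ∈ F, Set.Ico ((s : ℝ) + c) ((s : ℝ) + c + 1))
        ∪ (⋃ s ∈ F, {(s : ℝ) + c + 1}) := by
    simp_rw [hsplit, Set.iUnion_union_distrib]
  have h0 : volume (⋃ s ∈ F, ({(s : ℝ) + c + 1} : Set ℝ)) = 0 :=
    (measure_biUnion_null_iff F.countable_toSet).2 fun s _ => measure_singleton _
  have h2 : volume (⋃ s ∈ F, Set.Ico ((s : ℝ) + c) ((s : ℝ) + c + 1)) = F.card := by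
    rw [measure_biUnion_finset]
    · have hv : ∀ s : ℤ, volume (Set.Ico ((s : ℝ) + c) ((s : ℝ) + c + 1)) = 1 := by
        intro s
        rw [Real.volume_Ico]
        norm_num
      simp [hv]
    · intro s hs t ht hst
      rcases lt_or_gt_of_ne hst with h | h
      · have h' : (s : ℝ) + 1 ≤ t := by exact_mod_cast h
        exact Set.Ico_disjoint_Ico.2
          (le_trans (min_le_left _ _) (le_trans (by linarith) (le_max_right _ _)))
      · have h' : (t : ℝ) + 1 ≤ s := by exact_mod_cast h
        exact Set.Ico_disjoint_Ico.2
          (le_trans (min_le_right _ _) (le_trans (by linarith) (le_max_left _ _)))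
    · intro s _
      exact measurableSet_Ico
  rw [h1]
  refine le_antisymm ?_ ?_
  · calc volume _ ≤ volume (⋃ s ∈ F, Set.Ico ((s : ℝ) + c) ((s : ℝ) + c + 1))
        + volume (⋃ s ∈ F, ({(s : ℝ) + c + 1} : Set ℝ)) := measure_union_le _ _
    _ = F.card := by rw [h0, add_zero, h2]
  · rw [← h2]
    exact measure_mono Set.subset_union_left

theorem discrete_to_continuous (A : Finset ℤ) :
    ∃ (n : ℕ) (x y : Fin n → ℝ),
      (∀ i, x i ≤ y i) ∧
      (∀ i j, i < j → y i < x j) ∧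
      volume ((⋃ i, Set.Icc (x i) (y i)) + (⋃ i, Set.Icc (x i) (y i)))
        = ((A + A).card : ℝ≥0∞) ∧
      volume ((⋃ i, Set.Icc (x i) (y i)) - (⋃ i, Set.Icc (x i) (y i)))
        = ((A - A).card : ℝ≥0∞) := by
  classical
  set n := A.card with hn
  set e : Fin n ≃o (A : Finset ℤ) := A.orderIsoOfFin rfl with he
  have hU : (⋃ i, Set.Icc (((e i : ℤ) : ℝ)) (((e i : ℤ) : ℝ) + 1/2))
      = ⋃ a ∈ A, Set.Icc ((a : ℝ)) ((a : ℝ) + 1/2) := by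
    ext t
    simp only [Set.mem_iUnion, Set.mem_Icc]
    constructor
    · rintro ⟨i, h⟩
      exact ⟨(e i : ℤ), (e i).2, h⟩
    · rintro ⟨a, ha, h⟩
      exact ⟨e.symm ⟨a, ha⟩, by simpa using h⟩
  refine ⟨n, fun i => ((e i : ℤ) : ℝ), fun i => ((e i : ℤ) : ℝ) + 1/2, ?_, ?_, ?_, ?_⟩
  · intro i; linarith
  · intro i j hij
    have h1 : (e i : ℤ) < (e j : ℤ) := by exact_mod_cast e.strictMono hij
    have : ((e i : ℤ) : ℝ) + 1 ≤ ((e j : ℤ) : ℝ) := by exact_mod_cast h1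
    linarith
  · -- sumset
    rw [hU]
    have hsum : (⋃ a ∈ A, Set.Icc ((a : ℝ)) ((a : ℝ) + 1/2))
        + (⋃ a ∈ A, Set.Icc ((a : ℝ)) ((a : ℝ) + 1/2))
        = ⋃ s ∈ A + A, Set.Icc ((s : ℝ) + 0) ((s : ℝ) + 0 + 1) := by
      ext t
      simp only [Set.mem_add, Set.mem_iUnion, Set.mem_Icc, Finset.mem_add]
      constructor
      · rintro ⟨u, hu, v, hv, rfl⟩
        obtain ⟨a, ha, hu1, hu2⟩ := hu
        obtain ⟨b, hb, hv1, hv2⟩ := hv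
        refine ⟨a + b, ⟨a, ha, b, hb, rfl⟩, ?_, ?_⟩ <;> push_cast <;> linarith
      · rintro ⟨s, ⟨a, ha, b, hb, rfl⟩, h1, h2⟩
        have hmem : t ∈ Set.Icc (((a : ℝ)) + b) (((a : ℝ) + 1/2) + ((b : ℝ) + 1/2)) := by
          constructor <;> push_cast at h1 h2 ⊢ <;> linarith
        rw [← Set.Icc_add_Icc (by linarith : (a : ℝ) ≤ (a : ℝ) + 1/2)
          (by linarith : (b : ℝ) ≤ (b : ℝ) + 1/2)] at hmem
        obtain ⟨u, hu, v, hv, rfl⟩ := hmem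
        exact ⟨u, ⟨a, ha, hu.1, hu.2⟩, v, ⟨b, hb, hv.1, hv.2⟩, rfl⟩
    rw [hsum, vol_biUnion_unit]
  · -- difference set
    rw [hU]
    have hsub : (⋃ a ∈ A, Set.Icc ((a : ℝ)) ((a : ℝ) + 1/2))
        - (⋃ a ∈ A, Set.Icc ((a : ℝ)) ((a : ℝ) + 1/2))
        = ⋃ s ∈ A - A, Set.Icc ((s : ℝ) + (-(1/2) : ℝ)) ((s : ℝ) + (-(1/2) : ℝ) + 1) := by
      ext t
      simp only [Set.mem_sub, Set.mem_iUnion, Set.mem_Icc, Finset.mem_sub]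
      constructor
      · rintro ⟨u, hu, v, hv, rfl⟩
        obtain ⟨a, ha, hu1, hu2⟩ := hu
        obtain ⟨b, hb, hv1, hv2⟩ := hv
        refine ⟨a - b, ⟨a, ha, b, hb, rfl⟩, ?_, ?_⟩ <;> push_cast <;> linarith
      · rintro ⟨s, ⟨a, ha, b, hb, rfl⟩, h1, h2⟩
        have hmem : t ∈ Set.Icc (((a : ℝ)) - ((b : ℝ) + 1/2)) (((a : ℝ) + 1/2) - (b : ℝ)) := by
          constructor <;> push_cast at h1 h2 ⊢ <;> linarith
        rw [← Icc_sub_Icc' (by linarith : (a : ℝ) ≤ (a : ℝ) + 1/2)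
          (by linarith : (b : ℝ) ≤ (b : ℝ) + 1/2)] at hmem
        obtain ⟨u, hu, v, hv, rfl⟩ := hmem
        exact ⟨u, ⟨a, ha, hu.1, hu.2⟩, v, ⟨b, hb, hv.1, hv.2⟩, rfl⟩
    rw [hsub, vol_biUnion_unit]
end

section
/- Let A and B be finite sets of integers, and let A* = ⋃_{a ∈ A} [a − 1/4, a + 1/4] ⊆ ℝ and B* = ⋃_{b ∈ B} [b − 1/4, b + 1/4] ⊆ ℝ be their continuous representations. Then μ(A* + B*) = |A + B| and μ(A* − B*) = |A − B|. -/
open MeasureTheory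
open scoped Pointwise ENNReal

lemma meas_union_aux (C : Finset ℤ) :
    volume (⋃ c ∈ C, Set.Icc ((c : ℝ) - 1/2) ((c : ℝ) + 1/2)) = (C.card : ℝ≥0∞) := by
  rw [measure_biUnion_finset₀]
  · rw [Finset.card_eq_sum_ones]
    push_cast
    refine Finset.sum_congr rfl fun c _ => ?_
    rw [Real.volume_Icc]
    norm_num
  · intro c hc d hd hne
    have h1 : (1 : ℝ) ≤ |(c : ℝ) - d| := by
      rw [← Int.cast_sub, ← Int.cast_abs]
      exact_mod_cast Int.one_le_abs (sub_ne_zero.mpr hne)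
    simp only [Function.onFun, MeasureTheory.AEDisjoint]
    rw [Set.Icc_inter_Icc, Real.volume_Icc, ENNReal.ofReal_eq_zero]
    rcases le_abs.1 h1 with h | h
    · calc min ((c:ℝ) + 1/2) ((d:ℝ) + 1/2) - max ((c:ℝ) - 1/2) ((d:ℝ) - 1/2)
          ≤ ((d:ℝ) + 1/2) - ((c:ℝ) - 1/2) := by
            gcongr; exacts [min_le_right _ _, le_max_left _ _]
        _ ≤ 0 := by linarith
    · calc min ((c:ℝ) + 1/2) ((d:ℝ) + 1/2) - max ((c:ℝ) - 1/2) ((d:ℝ) - 1/2)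
          ≤ ((c:ℝ) + 1/2) - ((d:ℝ) - 1/2) := by
            gcongr; exacts [min_le_left _ _, le_max_right _ _]
        _ ≤ 0 := by linarith
  · exact fun c _ => measurableSet_Icc.nullMeasurableSet

lemma add_union_aux (A B : Finset ℤ) :
    (⋃ a ∈ A, Set.Icc ((a : ℝ) - 1/4) ((a : ℝ) + 1/4))
      + (⋃ b ∈ B, Set.Icc ((b : ℝ) - 1/4) ((b : ℝ) + 1/4))
    = ⋃ c ∈ (A + B : Finset ℤ), Set.Icc ((c : ℝ) - 1/2) ((c : ℝ) + 1/2) := by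
  ext x
  simp only [Set.mem_add, Set.mem_iUnion, Finset.mem_add, exists_prop, Set.mem_Icc]
  constructor
  · rintro ⟨y, ⟨a, ha, hy1, hy2⟩, z, ⟨b, hb, hz1, hz2⟩, rfl⟩
    refine ⟨a + b, ⟨a, ha, b, hb, rfl⟩, ?_, ?_⟩ <;> push_cast <;> linarith
  · rintro ⟨c, ⟨a, ha, b, hb, rfl⟩, hx1, hx2⟩
    push_cast at hx1 hx2
    have key : x ∈ Set.Icc ((a:ℝ) - 1/4) ((a:ℝ) + 1/4) + Set.Icc ((b:ℝ) - 1/4) ((b:ℝ) + 1/4) := by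
      rw [Set.Icc_add_Icc (by linarith) (by linarith)]
      constructor <;> linarith
    obtain ⟨y, hy, z, hz, rfl⟩ := key
    rw [Set.mem_Icc] at hy hz
    exact ⟨y, ⟨a, ha, hy.1, hy.2⟩, z, ⟨b, hb, hz.1, hz.2⟩, rfl⟩

lemma neg_union_aux (B : Finset ℤ) :
    -(⋃ b ∈ B, Set.Icc ((b : ℝ) - 1/4) ((b : ℝ) + 1/4))
    = ⋃ b ∈ (-B : Finset ℤ), Set.Icc ((b : ℝ) - 1/4) ((b : ℝ) + 1/4) := by
  ext x
  simp only [Set.mem_neg, Set.mem_iUnion, Finset.mem_neg, exists_prop, Set.mem_Icc]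
  constructor
  · rintro ⟨b, hb, h1, h2⟩
    exact ⟨-b, ⟨b, hb, rfl⟩, by push_cast; linarith, by push_cast; linarith⟩
  · rintro ⟨b, ⟨b', hb', rfl⟩, h1, h2⟩
    push_cast at h1 h2
    exact ⟨b', hb', by linarith, by linarith⟩

theorem continuous_representation_additive (A B : Finset ℤ) :
    volume ((⋃ a ∈ A, Set.Icc ((a : ℝ) - 1/4) ((a : ℝ) + 1/4))
            + (⋃ b ∈ B, Set.Icc ((b : ℝ) - 1/4) ((b : ℝ) + 1/4)))
      = ((A + B).card : ℝ≥0∞) ∧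
    volume ((⋃ a ∈ A, Set.Icc ((a : ℝ) - 1/4) ((a : ℝ) + 1/4))
            - (⋃ b ∈ B, Set.Icc ((b : ℝ) - 1/4) ((b : ℝ) + 1/4)))
      = ((A - B).card : ℝ≥0∞) := by
  constructor
  · rw [add_union_aux, meas_union_aux]
  · rw [sub_eq_add_neg, neg_union_aux, add_union_aux, meas_union_aux]
    congr 1
    rw [sub_eq_add_neg]
end

section
/- Let A and B be finite sets of integers with continuous representations A* = ⋃_{a ∈ A} [a − 1/4, a + 1/4] and B* = ⋃_{b ∈ B} [b − 1/4, b + 1/4]. Then A* + B* = ⋃ { [n − 1/2, n + 1/2] : n ∈ ℤ and (n : ℝ) ∈ A* + B* }, and likewise A* − B* = ⋃ { [n − 1/2, n + 1/2] : n ∈ ℤ and (n : ℝ) ∈ A* − B* }; that is, the sumset and difference set of the continuous representations are exactly the unions of the closed balls of radius 1/2 centered at the integers they contain. -/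
open scoped Pointwise

private lemma aux_sum (A B : Finset ℤ) :
    ((⋃ a ∈ A, Set.Icc ((a : ℝ) - 1/4) ((a : ℝ) + 1/4))
        + (⋃ b ∈ B, Set.Icc ((b : ℝ) - 1/4) ((b : ℝ) + 1/4))
      = ⋃ n ∈ {n : ℤ | (n : ℝ) ∈ (⋃ a ∈ A, Set.Icc ((a : ℝ) - 1/4) ((a : ℝ) + 1/4))
            + (⋃ b ∈ B, Set.Icc ((b : ℝ) - 1/4) ((b : ℝ) + 1/4))},
          Set.Icc ((n : ℝ) - 1/2) ((n : ℝ) + 1/2)) := by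
  ext x
  simp only [Set.mem_add, Set.mem_iUnion, Set.mem_setOf_eq, Set.mem_Icc, exists_prop]
  constructor
  · rintro ⟨y, ⟨a, ha, hy1, hy2⟩, z, ⟨b, hb, hz1, hz2⟩, rfl⟩
    refine ⟨a + b, ⟨(a : ℝ), ⟨a, ha, by norm_num, by norm_num⟩,
      (b : ℝ), ⟨b, hb, by norm_num, by norm_num⟩, by push_cast; ring⟩,
      by push_cast; linarith, by push_cast; linarith⟩
  · rintro ⟨n, ⟨y, ⟨a, ha, hy1, hy2⟩, z, ⟨b, hb, hz1, hz2⟩, hyz⟩, hx1, hx2⟩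
    have hn : (n : ℝ) = (a : ℝ) + b := by
      have h1 : n < a + b + 1 := by
        have : (n : ℝ) < ((a + b + 1 : ℤ) : ℝ) := by push_cast; linarith
        exact_mod_cast this
      have h2 : a + b - 1 < n := by
        have : ((a + b - 1 : ℤ) : ℝ) < (n : ℝ) := by push_cast; linarith
        exact_mod_cast this
      have : n = a + b := by omega
      rw [this]; push_cast; ring
    refine ⟨(a : ℝ) + (x - ((a : ℝ) + b)) / 2, ⟨a, ha, by linarith [hn ▸ hx1, hn ▸ hx2], by linarith [hn ▸ hx1, hn ▸ hx2]⟩,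
      (b : ℝ) + (x - ((a : ℝ) + b)) / 2, ⟨b, hb, by linarith [hn ▸ hx1, hn ▸ hx2], by linarith [hn ▸ hx1, hn ▸ hx2]⟩, by ring⟩

private lemma aux_sub (A B : Finset ℤ) :
    ((⋃ a ∈ A, Set.Icc ((a : ℝ) - 1/4) ((a : ℝ) + 1/4))
        - (⋃ b ∈ B, Set.Icc ((b : ℝ) - 1/4) ((b : ℝ) + 1/4))
      = ⋃ n ∈ {n : ℤ | (n : ℝ) ∈ (⋃ a ∈ A, Set.Icc ((a : ℝ) - 1/4) ((a : ℝ) + 1/4))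
            - (⋃ b ∈ B, Set.Icc ((b : ℝ) - 1/4) ((b : ℝ) + 1/4))},
          Set.Icc ((n : ℝ) - 1/2) ((n : ℝ) + 1/2)) := by
  ext x
  simp only [Set.mem_sub, Set.mem_iUnion, Set.mem_setOf_eq, Set.mem_Icc, exists_prop]
  constructor
  · rintro ⟨y, ⟨a, ha, hy1, hy2⟩, z, ⟨b, hb, hz1, hz2⟩, rfl⟩
    refine ⟨a - b, ⟨(a : ℝ), ⟨a, ha, by norm_num, by norm_num⟩,
      (b : ℝ), ⟨b, hb, by norm_num, by norm_num⟩, by push_cast; ring⟩,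
      by push_cast; linarith, by push_cast; linarith⟩
  · rintro ⟨n, ⟨y, ⟨a, ha, hy1, hy2⟩, z, ⟨b, hb, hz1, hz2⟩, hyz⟩, hx1, hx2⟩
    have hn : (n : ℝ) = (a : ℝ) - b := by
      have h1 : n < a - b + 1 := by
        have : (n : ℝ) < ((a - b + 1 : ℤ) : ℝ) := by push_cast; linarith
        exact_mod_cast this
      have h2 : a - b - 1 < n := by
        have : ((a - b - 1 : ℤ) : ℝ) < (n : ℝ) := by push_cast; linarith
        exact_mod_cast this
      have : n = a - b := by omega
      rw [this]; push_cast; ring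
    refine ⟨(a : ℝ) + (x - ((a : ℝ) - b)) / 2, ⟨a, ha, by linarith [hn ▸ hx1, hn ▸ hx2], by linarith [hn ▸ hx1, hn ▸ hx2]⟩,
      (b : ℝ) - (x - ((a : ℝ) - b)) / 2, ⟨b, hb, by linarith [hn ▸ hx1, hn ▸ hx2], by linarith [hn ▸ hx1, hn ▸ hx2]⟩, by ring⟩

theorem sumset_eq_union_of_balls (A B : Finset ℤ) :
    ((⋃ a ∈ A, Set.Icc ((a : ℝ) - 1/4) ((a : ℝ) + 1/4))
        + (⋃ b ∈ B, Set.Icc ((b : ℝ) - 1/4) ((b : ℝ) + 1/4))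
      = ⋃ n ∈ {n : ℤ | (n : ℝ) ∈ (⋃ a ∈ A, Set.Icc ((a : ℝ) - 1/4) ((a : ℝ) + 1/4))
            + (⋃ b ∈ B, Set.Icc ((b : ℝ) - 1/4) ((b : ℝ) + 1/4))},
          Set.Icc ((n : ℝ) - 1/2) ((n : ℝ) + 1/2)) ∧
    ((⋃ a ∈ A, Set.Icc ((a : ℝ) - 1/4) ((a : ℝ) + 1/4))
        - (⋃ b ∈ B, Set.Icc ((b : ℝ) - 1/4) ((b : ℝ) + 1/4))
      = ⋃ n ∈ {n : ℤ | (n : ℝ) ∈ (⋃ a ∈ A, Set.Icc ((a : ℝ) - 1/4) ((a : ℝ) + 1/4))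
            - (⋃ b ∈ B, Set.Icc ((b : ℝ) - 1/4) ((b : ℝ) + 1/4))},
          Set.Icc ((n : ℝ) - 1/2) ((n : ℝ) + 1/2)) :=
  ⟨aux_sum A B, aux_sub A B⟩
end

section
/- Let x₁ ≤ y₁ ≤ x₂ ≤ y₂ be real numbers and J = [x₁, y₁] ∪ [x₂, y₂], a union of two closed intervals. Then μ(J + J) ≤ μ(J − J); that is, there are no MSTD sets that are unions of two intervals. -/
open MeasureTheory
open scoped Pointwise

private lemma Icc_sub_Icc_real (a b c d : ℝ) (hab : a ≤ b) (hcd : c ≤ d) :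
    Set.Icc a b - Set.Icc c d = Set.Icc (a - d) (b - c) := by
  rw [sub_eq_add_neg, Set.neg_Icc, Set.Icc_add_Icc hab (neg_le_neg hcd)]
  simp [sub_eq_add_neg]

private lemma Icc_disj (a b c d : ℝ) (h : b < c) : Disjoint (Set.Icc a b) (Set.Icc c d) := by
  rw [Set.disjoint_left]; rintro x ⟨_, hxb⟩ ⟨hcx, _⟩; linarith

theorem no_mstd_two_intervals (x₁ y₁ x₂ y₂ : ℝ)
    (h₁ : x₁ ≤ y₁) (h₂ : y₁ ≤ x₂) (h₃ : x₂ ≤ y₂) :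
    volume ((Set.Icc x₁ y₁ ∪ Set.Icc x₂ y₂) + (Set.Icc x₁ y₁ ∪ Set.Icc x₂ y₂))
      ≤ volume ((Set.Icc x₁ y₁ ∪ Set.Icc x₂ y₂) - (Set.Icc x₁ y₁ ∪ Set.Icc x₂ y₂)) := by
  have h13 : x₁ ≤ y₂ := by linarith
  have h12 : x₁ ≤ x₂ := by linarith
  have h23 : y₁ ≤ y₂ := by linarith
  have hsum : (Set.Icc x₁ y₁ ∪ Set.Icc x₂ y₂) + (Set.Icc x₁ y₁ ∪ Set.Icc x₂ y₂) =
      Set.Icc (x₁+x₁) (y₁+y₁) ∪ Set.Icc (x₁+x₂) (y₁+y₂) ∪ Set.Icc (x₂+x₂) (y₂+y₂) := by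
    rw [Set.union_add, Set.add_union, Set.add_union,
      Set.Icc_add_Icc h₁ h₁, Set.Icc_add_Icc h₁ h₃, Set.Icc_add_Icc h₃ h₁, Set.Icc_add_Icc h₃ h₃,
      add_comm x₂ x₁, add_comm y₂ y₁]
    ext t; simp only [Set.mem_union]; tauto
  have hsub : (Set.Icc x₁ y₁ ∪ Set.Icc x₂ y₂) - (Set.Icc x₁ y₁ ∪ Set.Icc x₂ y₂) =
      Set.Icc (x₁-y₂) (y₁-x₂) ∪ Set.Icc (x₁-y₁) (y₁-x₁) ∪ Set.Icc (x₂-y₂) (y₂-x₂)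
        ∪ Set.Icc (x₂-y₁) (y₂-x₁) := by
    rw [Set.union_sub, Set.sub_union, Set.sub_union,
      Icc_sub_Icc_real _ _ _ _ h₁ h₁, Icc_sub_Icc_real _ _ _ _ h₁ h₃,
      Icc_sub_Icc_real _ _ _ _ h₃ h₁, Icc_sub_Icc_real _ _ _ _ h₃ h₃]
    ext t; simp only [Set.mem_union]; tauto
  rcases le_or_gt (x₂ - y₁) (max (y₁ - x₁) (y₂ - x₂)) with hg | hg
  · -- small gap case
    have hABsub : Set.Icc x₁ y₁ ∪ Set.Icc x₂ y₂ ⊆ Set.Icc x₁ y₂ :=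
      Set.union_subset (Set.Icc_subset_Icc le_rfl h23) (Set.Icc_subset_Icc h12 le_rfl)
    have hup : (Set.Icc x₁ y₁ ∪ Set.Icc x₂ y₂) + (Set.Icc x₁ y₁ ∪ Set.Icc x₂ y₂)
        ⊆ Set.Icc (x₁+x₁) (y₂+y₂) := by
      calc (Set.Icc x₁ y₁ ∪ Set.Icc x₂ y₂) + (Set.Icc x₁ y₁ ∪ Set.Icc x₂ y₂)
          ⊆ Set.Icc x₁ y₂ + Set.Icc x₁ y₂ := Set.add_subset_add hABsub hABsub
        _ = _ := Set.Icc_add_Icc h13 h13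
    have hlo : Set.Icc (x₁-y₂) (y₂-x₁) ⊆
        (Set.Icc x₁ y₁ ∪ Set.Icc x₂ y₂) - (Set.Icc x₁ y₁ ∪ Set.Icc x₂ y₂) := by
      rw [hsub]
      rintro t ⟨ht1, ht2⟩
      simp only [Set.mem_union, Set.mem_Icc]
      rcases le_or_gt t (y₁ - x₂) with h' | h'
      · exact Or.inl (Or.inl (Or.inl ⟨ht1, h'⟩))
      rcases le_or_gt (x₂ - y₁) t with h'' | h''
      · exact Or.inr ⟨h'', ht2⟩
      rcases le_total (y₁ - x₁) (y₂ - x₂) with hm | hm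
      · have : x₂ - y₁ ≤ y₂ - x₂ := by simpa [max_eq_right hm] using hg
        exact Or.inl (Or.inr ⟨by linarith, by linarith⟩)
      · have : x₂ - y₁ ≤ y₁ - x₁ := by simpa [max_eq_left hm] using hg
        exact Or.inl (Or.inl (Or.inr ⟨by linarith, by linarith⟩))
    calc volume ((Set.Icc x₁ y₁ ∪ Set.Icc x₂ y₂) + (Set.Icc x₁ y₁ ∪ Set.Icc x₂ y₂))
        ≤ volume (Set.Icc (x₁+x₁) (y₂+y₂)) := measure_mono hup
      _ = ENNReal.ofReal (y₂ + y₂ - (x₁ + x₁)) := Real.volume_Icc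
      _ = volume (Set.Icc (x₁-y₂) (y₂-x₁)) := by rw [Real.volume_Icc]; ring_nf
      _ ≤ _ := measure_mono hlo
  · -- big gap case
    have hub : volume ((Set.Icc x₁ y₁ ∪ Set.Icc x₂ y₂) + (Set.Icc x₁ y₁ ∪ Set.Icc x₂ y₂)) ≤
        ENNReal.ofReal ((y₁+y₁-(x₁+x₁)) + (y₁+y₂-(x₁+x₂)) + (y₂+y₂-(x₂+x₂))) := by
      rw [hsum, ENNReal.ofReal_add (by linarith) (by linarith),
        ENNReal.ofReal_add (by linarith) (by linarith)]
      refine le_trans (measure_union_le _ _) ?_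
      gcongr
      · refine le_trans (measure_union_le _ _) ?_
        gcongr <;> rw [Real.volume_Icc]
      · rw [Real.volume_Icc]
    refine le_trans hub ?_
    have hg1 : y₁ - x₁ < x₂ - y₁ := lt_of_le_of_lt (le_max_left _ _) hg
    have hg2 : y₂ - x₂ < x₂ - y₁ := lt_of_le_of_lt (le_max_right _ _) hg
    rcases le_total (y₂ - x₂) (y₁ - x₁) with hm | hm
    · -- first interval is at least as long
      have hDsub : Set.Icc (x₁-y₂) (y₁-x₂) ∪ Set.Icc (x₁-y₁) (y₁-x₁) ∪ Set.Icc (x₂-y₁) (y₂-x₁)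
          ⊆ (Set.Icc x₁ y₁ ∪ Set.Icc x₂ y₂) - (Set.Icc x₁ y₁ ∪ Set.Icc x₂ y₂) := by
        rw [hsub]; intro t ht; simp only [Set.mem_union] at ht ⊢; tauto
      have hd1 : Disjoint (Set.Icc (x₁-y₂) (y₁-x₂)) (Set.Icc (x₁-y₁) (y₁-x₁)) :=
        Icc_disj _ _ _ _ (by linarith)
      have hd2 : Disjoint (Set.Icc (x₁-y₂) (y₁-x₂) ∪ Set.Icc (x₁-y₁) (y₁-x₁))
          (Set.Icc (x₂-y₁) (y₂-x₁)) :=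
        Disjoint.union_left (Icc_disj _ _ _ _ (by linarith)) (Icc_disj _ _ _ _ (by linarith))
      have hvol : volume (Set.Icc (x₁-y₂) (y₁-x₂) ∪ Set.Icc (x₁-y₁) (y₁-x₁)
            ∪ Set.Icc (x₂-y₁) (y₂-x₁))
          = ENNReal.ofReal ((y₁-x₂-(x₁-y₂)) + (y₁-x₁-(x₁-y₁)) + (y₂-x₁-(x₂-y₁))) := by
        rw [measure_union hd2 measurableSet_Icc, measure_union hd1 measurableSet_Icc,
          Real.volume_Icc, Real.volume_Icc, Real.volume_Icc,
          ENNReal.ofReal_add (by linarith) (by linarith),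
          ENNReal.ofReal_add (by linarith) (by linarith)]
      calc ENNReal.ofReal ((y₁+y₁-(x₁+x₁)) + (y₁+y₂-(x₁+x₂)) + (y₂+y₂-(x₂+x₂)))
          ≤ ENNReal.ofReal ((y₁-x₂-(x₁-y₂)) + (y₁-x₁-(x₁-y₁)) + (y₂-x₁-(x₂-y₁))) :=
            ENNReal.ofReal_le_ofReal (by linarith)
        _ = _ := hvol.symm
        _ ≤ _ := measure_mono hDsub
    · -- second interval is at least as long
      have hDsub : Set.Icc (x₁-y₂) (y₁-x₂) ∪ Set.Icc (x₂-y₂) (y₂-x₂) ∪ Set.Icc (x₂-y₁) (y₂-x₁)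
          ⊆ (Set.Icc x₁ y₁ ∪ Set.Icc x₂ y₂) - (Set.Icc x₁ y₁ ∪ Set.Icc x₂ y₂) := by
        rw [hsub]; intro t ht; simp only [Set.mem_union] at ht ⊢; tauto
      have hd1 : Disjoint (Set.Icc (x₁-y₂) (y₁-x₂)) (Set.Icc (x₂-y₂) (y₂-x₂)) :=
        Icc_disj _ _ _ _ (by linarith)
      have hd2 : Disjoint (Set.Icc (x₁-y₂) (y₁-x₂) ∪ Set.Icc (x₂-y₂) (y₂-x₂))
          (Set.Icc (x₂-y₁) (y₂-x₁)) :=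
        Disjoint.union_left (Icc_disj _ _ _ _ (by linarith)) (Icc_disj _ _ _ _ (by linarith))
      have hvol : volume (Set.Icc (x₁-y₂) (y₁-x₂) ∪ Set.Icc (x₂-y₂) (y₂-x₂)
            ∪ Set.Icc (x₂-y₁) (y₂-x₁))
          = ENNReal.ofReal ((y₁-x₂-(x₁-y₂)) + (y₂-x₂-(x₂-y₂)) + (y₂-x₁-(x₂-y₁))) := by
        rw [measure_union hd2 measurableSet_Icc, measure_union hd1 measurableSet_Icc,
          Real.volume_Icc, Real.volume_Icc, Real.volume_Icc,
          ENNReal.ofReal_add (by linarith) (by linarith),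
          ENNReal.ofReal_add (by linarith) (by linarith)]
      calc ENNReal.ofReal ((y₁+y₁-(x₁+x₁)) + (y₁+y₂-(x₁+x₂)) + (y₂+y₂-(x₂+x₂)))
          ≤ ENNReal.ofReal ((y₁-x₂-(x₁-y₂)) + (y₂-x₂-(x₂-y₂)) + (y₂-x₁-(x₂-y₁))) :=
            ENNReal.ofReal_le_ofReal (by linarith)
        _ = _ := hvol.symm
        _ ≤ _ := measure_mono hDsub
end

section
/- For every natural number n ≥ 4 there exist real numbers x₁ < y₁ < x₂ < y₂ < ... < xₙ < yₙ such that the set J = ⋃_{i=1}^{n} [xᵢ, yᵢ], a union of n pairwise disjoint nondegenerate closed intervals, satisfies μ(J + J) > μ(J − J); that is, for every n ≥ 4 there exist MSTD sets that are unions of n disjoint intervals. -/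
open MeasureTheory
open scoped Pointwise

/-- Pieces `[2qi, 2qi+q]`, `i < m`, with `q = 1/(2m-1)`, sum-cover `[0,2]`. -/
lemma pieces_cover (m : ℕ) (hm : 1 ≤ m) (q : ℝ) (hq : q = 1 / (2 * (m : ℝ) - 1))
    (t : ℝ) (ht : t ∈ Set.Icc (0:ℝ) 2) :
    ∃ i j : ℕ, i < m ∧ j < m ∧ ∃ u v : ℝ,
      u ∈ Set.Icc (2*q*i) (2*q*i + q) ∧ v ∈ Set.Icc (2*q*j) (2*q*j + q) ∧ u + v = t := by
  have hm' : (1:ℝ) ≤ (m:ℝ) := by exact_mod_cast hm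
  have hden : (0:ℝ) < 2 * (m:ℝ) - 1 := by linarith
  have hq0 : 0 < q := by rw [hq]; positivity
  have hqm : (2 * (m:ℝ) - 1) * q = 1 := by rw [hq]; field_simp
  obtain ⟨ht0, ht2⟩ := ht
  set k : ℕ := ⌊t / (2*q)⌋₊ with hk
  have h1 : (k:ℝ) ≤ t / (2*q) := Nat.floor_le (div_nonneg ht0 (by positivity))
  have h2 : t / (2*q) < (k:ℝ) + 1 := Nat.lt_floor_add_one _
  have h1' : (k:ℝ) * (2*q) ≤ t := by
    rw [← le_div_iff₀ (by positivity)]; exact h1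
  have h2' : t < ((k:ℝ) + 1) * (2*q) := by
    rw [← div_lt_iff₀ (by positivity)]; exact h2
  by_cases hkle : k ≤ 2 * m - 2
  · set i : ℕ := min k (m-1) with hi
    set j : ℕ := k - i with hj
    have hij : i + j = k := by omega
    have hcast : (i:ℝ) + (j:ℝ) = (k:ℝ) := by exact_mod_cast congrArg (Nat.cast : ℕ → ℝ) hij
    set r : ℝ := t - 2*q*k with hr
    have hr0 : 0 ≤ r := by simp only [hr]; nlinarith
    have hr2 : r < 2*q := by simp only [hr]; nlinarith
    have hmin0 : 0 ≤ min r q := le_min hr0 hq0.le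
    have hminq : min r q ≤ q := min_le_right r q
    have hd0 : 0 ≤ r - min r q := by
      rcases le_total r q with h|h
      · simp [min_eq_left h]
      · simp [min_eq_right h]; linarith
    have hdq : r - min r q ≤ q := by
      rcases le_total r q with h|h
      · simp [min_eq_left h]; exact hq0.le
      · simp [min_eq_right h]; linarith
    refine ⟨i, j, by omega, by omega, 2*q*(i:ℝ) + min r q, 2*q*(j:ℝ) + (r - min r q),
      ⟨by linarith, by linarith⟩, ⟨by linarith, by linarith⟩, by nlinarith⟩
  · push_neg at hkle
    have hk1' : 2*(m:ℝ) - 1 ≤ (k:ℝ) := by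
      have h : 2*m - 1 ≤ k := by omega
      have h2 : ((2*m - 1 : ℕ):ℝ) ≤ (k:ℝ) := by exact_mod_cast h
      have hc : ((2*m - 1 : ℕ):ℝ) = 2*(m:ℝ) - 1 := by
        have h3 : (2*m - 1) + 1 = 2*m := by omega
        have h4 := congrArg (Nat.cast : ℕ → ℝ) h3
        push_cast at h4
        linarith
      linarith [hc ▸ h2]
    have ht2' : 2 ≤ t := by nlinarith
    have htt : t = 2 := le_antisymm ht2 ht2'
    have hcast : ((m-1 : ℕ):ℝ) = (m:ℝ) - 1 := by
      have h3 : (m - 1) + 1 = m := by omega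
      have h4 := congrArg (Nat.cast : ℕ → ℝ) h3
      push_cast at h4
      linarith
    have key : 2*q*((m:ℝ)-1) + q = 1 := by linear_combination hqm
    refine ⟨m-1, m-1, by omega, by omega, 1, 1, ?_, ?_, by linarith⟩
    all_goals rw [hcast]; exact ⟨by linarith, by linarith⟩

set_option maxHeartbeats 2000000 in
theorem mstd_exists_n_intervals (n : ℕ) (hn : 4 ≤ n) :
    ∃ x y : Fin n → ℝ,
      (∀ i, x i < y i) ∧
      (∀ i j, i < j → y i < x j) ∧
      volume ((⋃ i, Set.Icc (x i) (y i)) + (⋃ i, Set.Icc (x i) (y i)))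
        > volume ((⋃ i, Set.Icc (x i) (y i)) - (⋃ i, Set.Icc (x i) (y i))) := by
  have hm1 : 1 ≤ n - 3 := by omega
  obtain ⟨M, hM⟩ : ∃ M : ℝ, M = ((n - 3 : ℕ) : ℝ) := ⟨_, rfl⟩
  have hM1 : (1:ℝ) ≤ M := by rw [hM]; exact_mod_cast hm1
  have hden : (0:ℝ) < 2 * M - 1 := by linarith
  obtain ⟨q, hqdef⟩ : ∃ q : ℝ, q = 1 / (2 * M - 1) := ⟨_, rfl⟩
  have hq0 : 0 < q := by rw [hqdef]; exact div_pos one_pos hden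
  have hqm : (2 * M - 1) * q = 1 := by
    rw [hqdef, mul_one_div]; exact div_self (ne_of_gt hden)
  obtain ⟨x, hxdef⟩ : ∃ x : Fin n → ℝ, x = fun i : Fin n =>
      if (i:ℕ) = n-3 then 24 else if (i:ℕ) = n-2 then 60 else if (i:ℕ) = n-1 then 68
      else 2*q*(i:ℕ) := ⟨_, rfl⟩
  obtain ⟨y, hydef⟩ : ∃ y : Fin n → ℝ, y = fun i : Fin n =>
      if (i:ℕ) = n-3 then 48 else if (i:ℕ) = n-2 then 64 else if (i:ℕ) = n-1 then 72
      else 2*q*(i:ℕ) + q := ⟨_, rfl⟩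
  have key : ∀ k : ℕ, k < n - 3 → 2*q*(k:ℝ) + q ≤ 1 := by
    intro k hk
    have h1 : ((k+1 : ℕ):ℝ) ≤ M := by rw [hM]; exact_mod_cast hk
    have h2 : (k:ℝ) ≤ M - 1 := by push_cast at h1; linarith
    nlinarith
  have piecelt : ∀ k l : ℕ, k < l → 2*q*(k:ℝ) + q < 2*q*(l:ℝ) := by
    intro k l hkl
    have h1 : (k:ℝ) + 1 ≤ (l:ℝ) := by exact_mod_cast hkl
    nlinarith
  refine ⟨x, y, ?_, ?_, ?_⟩
  · intro i
    rw [hxdef, hydef]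
    dsimp only
    split_ifs <;> linarith
  · intro i j hij
    have hij' : (i:ℕ) < (j:ℕ) := hij
    have hi0 : (i:ℕ) < n := i.isLt
    have hj0 : (j:ℕ) < n := j.isLt
    rw [hxdef, hydef]
    dsimp only
    split_ifs <;>
      first
        | (exfalso; omega)
        | exact piecelt _ _ hij'
        | (have hk := key (i:ℕ) (by omega); linarith)
        | linarith
  · -- measure inequality
    have hpiece : ∀ k : ℕ, k < n - 3 →
        Set.Icc (2*q*(k:ℝ)) (2*q*(k:ℝ)+q) ⊆ ⋃ i, Set.Icc (x i) (y i) := by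
      intro k hk
      have hkn : k < n := by omega
      have hx : x ⟨k, hkn⟩ = 2*q*(k:ℝ) := by
        rw [hxdef]
        dsimp only
        rw [if_neg (by omega : ¬ k = n-3), if_neg (by omega : ¬ k = n-2),
          if_neg (by omega : ¬ k = n-1)]
      have hy : y ⟨k, hkn⟩ = 2*q*(k:ℝ) + q := by
        rw [hydef]
        dsimp only
        rw [if_neg (by omega : ¬ k = n-3), if_neg (by omega : ¬ k = n-2),
          if_neg (by omega : ¬ k = n-1)]
      exact Set.subset_iUnion_of_subset ⟨k, hkn⟩ (by rw [hx, hy])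
    have hI2 : Set.Icc (24:ℝ) 48 ⊆ ⋃ i, Set.Icc (x i) (y i) := by
      have hkn : n - 3 < n := by omega
      have hx : x ⟨n-3, hkn⟩ = 24 := by
        rw [hxdef]; dsimp only; rw [if_pos rfl]
      have hy : y ⟨n-3, hkn⟩ = 48 := by
        rw [hydef]; dsimp only; rw [if_pos rfl]
      exact Set.subset_iUnion_of_subset ⟨n-3, hkn⟩ (by rw [hx, hy])
    have hI3 : Set.Icc (60:ℝ) 64 ⊆ ⋃ i, Set.Icc (x i) (y i) := by
      have hkn : n - 2 < n := by omega
      have hx : x ⟨n-2, hkn⟩ = 60 := by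
        rw [hxdef]; dsimp only
        rw [if_neg (by omega : ¬ n-2 = n-3), if_pos rfl]
      have hy : y ⟨n-2, hkn⟩ = 64 := by
        rw [hydef]; dsimp only
        rw [if_neg (by omega : ¬ n-2 = n-3), if_pos rfl]
      exact Set.subset_iUnion_of_subset ⟨n-2, hkn⟩ (by rw [hx, hy])
    have hI4 : Set.Icc (68:ℝ) 72 ⊆ ⋃ i, Set.Icc (x i) (y i) := by
      have hkn : n - 1 < n := by omega
      have hx : x ⟨n-1, hkn⟩ = 68 := by
        rw [hxdef]; dsimp only
        rw [if_neg (by omega : ¬ n-1 = n-3), if_neg (by omega : ¬ n-1 = n-2), if_pos rfl]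
      have hy : y ⟨n-1, hkn⟩ = 72 := by
        rw [hydef]; dsimp only
        rw [if_neg (by omega : ¬ n-1 = n-3), if_neg (by omega : ¬ n-1 = n-2), if_pos rfl]
      exact Set.subset_iUnion_of_subset ⟨n-1, hkn⟩ (by rw [hx, hy])
    have h0J : (0:ℝ) ∈ ⋃ i, Set.Icc (x i) (y i) := by
      apply hpiece 0 (by omega)
      simp only [Nat.cast_zero, mul_zero, zero_add, Set.mem_Icc]
      exact ⟨le_refl _, hq0.le⟩
    have hJsub : (⋃ i, Set.Icc (x i) (y i)) ⊆
        Set.Icc (0:ℝ) 1 ∪ Set.Icc 24 48 ∪ Set.Icc 60 64 ∪ Set.Icc 68 72 := by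
      refine Set.iUnion_subset fun i => ?_
      intro a ha
      rw [hxdef, hydef] at ha
      dsimp only at ha
      split_ifs at ha with h1 h2 h3
      · exact Or.inl (Or.inl (Or.inr ha))
      · exact Or.inl (Or.inr ha)
      · exact Or.inr ha
      · refine Or.inl (Or.inl (Or.inl ⟨?_, ?_⟩))
        · have h0 : (0:ℝ) ≤ 2*q*((i:ℕ):ℝ) :=
            mul_nonneg (by linarith) (Nat.cast_nonneg _)
          exact le_trans h0 ha.1
        · have hk := key (i:ℕ) (by omega)
          exact le_trans ha.2 hk
    have hDiff : (⋃ i, Set.Icc (x i) (y i)) - (⋃ i, Set.Icc (x i) (y i)) ⊆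
        Set.Icc (-72:ℝ) (-67) ∪ Set.Icc (-64) (-59) ∪ Set.Icc (-48) 48
          ∪ Set.Icc 59 64 ∪ Set.Icc 67 72 := by
      intro z hz
      rw [Set.mem_sub] at hz
      obtain ⟨a, ha, b, hb, rfl⟩ := hz
      replace ha := hJsub ha
      replace hb := hJsub hb
      simp only [Set.mem_union, Set.mem_Icc] at ha hb ⊢
      rcases ha with ((ha|ha)|ha)|ha <;> rcases hb with ((hb|hb)|hb)|hb <;>
        first
          | exact Or.inl (Or.inl (Or.inl (Or.inl ⟨by linarith, by linarith⟩)))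
          | exact Or.inl (Or.inl (Or.inl (Or.inr ⟨by linarith, by linarith⟩)))
          | exact Or.inl (Or.inl (Or.inr ⟨by linarith, by linarith⟩))
          | exact Or.inl (Or.inr ⟨by linarith, by linarith⟩)
          | exact Or.inr ⟨by linarith, by linarith⟩
    have hSum : Set.Icc (0:ℝ) 2 ∪ Set.Icc 24 144 ⊆
        (⋃ i, Set.Icc (x i) (y i)) + (⋃ i, Set.Icc (x i) (y i)) := by
      intro t ht
      rw [Set.mem_add]
      rcases ht with ht | ht
      · obtain ⟨i, j, hi, hj, u, v, hu, hv, huv⟩ :=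
          pieces_cover (n-3) hm1 q (by rw [hqdef, hM]) t ht
        exact ⟨u, hpiece i hi hu, v, hpiece j hj hv, huv⟩
      · obtain ⟨h24, h144⟩ := ht
        by_cases c1 : t ≤ 48
        · exact ⟨0, h0J, t, hI2 ⟨h24, c1⟩, by ring⟩
        by_cases c2 : t ≤ 96
        · exact ⟨t/2, hI2 ⟨by linarith, by linarith⟩, t/2, hI2 ⟨by linarith, by linarith⟩,
            by ring⟩
        by_cases c3 : t ≤ 112
        · exact ⟨t-64, hI2 ⟨by linarith, by linarith⟩, 64, hI3 ⟨by norm_num, by norm_num⟩,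
            by ring⟩
        by_cases c4 : t ≤ 120
        · exact ⟨t-72, hI2 ⟨by linarith, by linarith⟩, 72, hI4 ⟨by norm_num, by norm_num⟩,
            by ring⟩
        by_cases c5 : t ≤ 128
        · exact ⟨t/2, hI3 ⟨by linarith, by linarith⟩, t/2, hI3 ⟨by linarith, by linarith⟩,
            by ring⟩
        by_cases c6 : t ≤ 132
        · exact ⟨t-68, hI3 ⟨by linarith, by linarith⟩, 68, hI4 ⟨by norm_num, by norm_num⟩,
            by ring⟩
        by_cases c7 : t ≤ 136
        · exact ⟨64, hI3 ⟨by norm_num, by norm_num⟩, t-64, hI4 ⟨by linarith, by linarith⟩,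
            by ring⟩
        · exact ⟨t/2, hI4 ⟨by linarith, by linarith⟩, t/2, hI4 ⟨by linarith, by linarith⟩,
            by ring⟩
    -- volumes
    have hvolsum : ENNReal.ofReal 122 ≤
        volume ((⋃ i, Set.Icc (x i) (y i)) + (⋃ i, Set.Icc (x i) (y i))) := by
      have hdisj : Disjoint (Set.Icc (0:ℝ) 2) (Set.Icc 24 144) := by
        rw [Set.disjoint_left]
        intro a ha hb
        simp only [Set.mem_Icc] at ha hb
        linarith
      have h1 : volume (Set.Icc (0:ℝ) 2 ∪ Set.Icc 24 144) = ENNReal.ofReal 122 := by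
        rw [measure_union hdisj measurableSet_Icc, Real.volume_Icc, Real.volume_Icc,
          ← ENNReal.ofReal_add (by norm_num) (by norm_num)]
        norm_num
      rw [← h1]
      exact measure_mono hSum
    have hvoldiff : volume ((⋃ i, Set.Icc (x i) (y i)) - (⋃ i, Set.Icc (x i) (y i))) ≤
        ENNReal.ofReal 116 := by
      refine le_trans (measure_mono hDiff) ?_
      have step : volume (Set.Icc (-72:ℝ) (-67) ∪ Set.Icc (-64) (-59) ∪ Set.Icc (-48) 48
          ∪ Set.Icc 59 64 ∪ Set.Icc 67 72) ≤
          volume (Set.Icc (-72:ℝ) (-67)) + volume (Set.Icc (-64:ℝ) (-59))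
            + volume (Set.Icc (-48:ℝ) 48) + volume (Set.Icc (59:ℝ) 64)
            + volume (Set.Icc (67:ℝ) 72) := by
        refine le_trans (measure_union_le _ _) ?_
        refine add_le_add ?_ le_rfl
        refine le_trans (measure_union_le _ _) ?_
        refine add_le_add ?_ le_rfl
        refine le_trans (measure_union_le _ _) ?_
        refine add_le_add ?_ le_rfl
        exact measure_union_le _ _
      refine le_trans step ?_
      rw [Real.volume_Icc, Real.volume_Icc, Real.volume_Icc, Real.volume_Icc, Real.volume_Icc,
        ← ENNReal.ofReal_add (by norm_num) (by norm_num),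
        ← ENNReal.ofReal_add (by norm_num) (by norm_num),
        ← ENNReal.ofReal_add (by norm_num) (by norm_num),
        ← ENNReal.ofReal_add (by norm_num) (by norm_num)]
      norm_num
    have hlt : ENNReal.ofReal 116 < ENNReal.ofReal 122 := by
      rw [ENNReal.ofReal_lt_ofReal_iff (by norm_num)]
      norm_num
    exact lt_of_le_of_lt hvoldiff (lt_of_lt_of_le hlt hvolsum)
end

section
/- The set J = [−1/4, 9/4] ∪ [15/4, 21/4] ∪ [35/4, 37/4] ∪ [47/4, 57/4] ⊆ ℝ, a union of four pairwise disjoint closed intervals (the continuous representation of the integer set {0, 1, 2, 4, 5, 9, 12, 13, 14}), satisfies μ(J + J) > μ(J − J); that is, J is an MSTD set consisting of four intervals. -/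
open MeasureTheory
open scoped Pointwise

private def Jset : Set ℝ :=
  Set.Icc (-1/4 : ℝ) (9/4) ∪ Set.Icc (15/4) (21/4)
    ∪ Set.Icc (35/4) (37/4) ∪ Set.Icc (47/4) (57/4)

private lemma mem_Icc_add_Icc {p q r s x : ℝ} (hpq : p ≤ q) (hrs : r ≤ s)
    (h1 : p + r ≤ x) (h2 : x ≤ q + s) : x ∈ Set.Icc p q + Set.Icc r s := by
  refine ⟨max p (x - s), ⟨le_max_left _ _, max_le hpq (by linarith)⟩,
    x - max p (x - s), ⟨?_, ?_⟩, by ring⟩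
  · rcases max_cases p (x - s) with ⟨h, _⟩ | ⟨h, _⟩ <;> rw [h] <;> linarith
  · rcases max_cases p (x - s) with ⟨h, _⟩ | ⟨h, _⟩ <;> rw [h] <;> linarith

private lemma hAJ : Set.Icc (-1/4 : ℝ) (9/4) ⊆ Jset :=
  fun x hx => Or.inl (Or.inl (Or.inl hx))
private lemma hBJ : Set.Icc (15/4 : ℝ) (21/4) ⊆ Jset :=
  fun x hx => Or.inl (Or.inl (Or.inr hx))
private lemma hCJ : Set.Icc (35/4 : ℝ) (37/4) ⊆ Jset :=
  fun x hx => Or.inl (Or.inr hx)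
private lemma hDJ : Set.Icc (47/4 : ℝ) (57/4) ⊆ Jset :=
  fun x hx => Or.inr hx

private lemma pair_add {p q r s : ℝ} (hpq : p ≤ q) (hrs : r ≤ s)
    (h1 : Set.Icc p q ⊆ Jset) (h2 : Set.Icc r s ⊆ Jset) {x : ℝ}
    (hx1 : p + r ≤ x) (hx2 : x ≤ q + s) : x ∈ Jset + Jset :=
  Set.add_subset_add h1 h2 (mem_Icc_add_Icc hpq hrs hx1 hx2)

private lemma lower_subset :
    Set.Icc (-1/2 : ℝ) (39/2) ∪ Set.Icc (41/2) (57/2) ⊆ Jset + Jset := by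
  rintro x (⟨hx1, hx2⟩ | ⟨hx1, hx2⟩)
  · rcases le_or_gt x (18/4) with h | h
    · exact pair_add (by norm_num) (by norm_num) hAJ hAJ (by linarith) (by linarith)
    rcases le_or_gt x (30/4) with h2 | h2
    · exact pair_add (by norm_num) (by norm_num) hAJ hBJ (by linarith) (by linarith)
    rcases le_or_gt x (42/4) with h3 | h3
    · exact pair_add (by norm_num) (by norm_num) hBJ hBJ (by linarith) (by linarith)
    rcases le_or_gt x (46/4) with h4 | h4
    · exact pair_add (by norm_num) (by norm_num) hAJ hCJ (by linarith) (by linarith)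
    rcases le_or_gt x (66/4) with h5 | h5
    · exact pair_add (by norm_num) (by norm_num) hAJ hDJ (by linarith) (by linarith)
    · exact pair_add (by norm_num) (by norm_num) hBJ hDJ (by linarith) (by linarith)
  · rcases le_or_gt x (94/4) with h | h
    · exact pair_add (by norm_num) (by norm_num) hCJ hDJ (by linarith) (by linarith)
    · exact pair_add (by norm_num) (by norm_num) hDJ hDJ (by linarith) (by linarith)

private lemma upper_subset :
    Jset - Jset ⊆ Set.Icc (-29/2 : ℝ) (-13/2) ∪ Set.Icc (-11/2) (11/2)
      ∪ Set.Icc (13/2) (29/2) := by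
  rintro x ⟨a, ha, b, hb, rfl⟩
  rcases ha with ((⟨ha1, ha2⟩ | ⟨ha1, ha2⟩) | ⟨ha1, ha2⟩) | ⟨ha1, ha2⟩ <;>
    rcases hb with ((⟨hb1, hb2⟩ | ⟨hb1, hb2⟩) | ⟨hb1, hb2⟩) | ⟨hb1, hb2⟩ <;>
    first
      | exact Or.inl (Or.inl ⟨by linarith, by linarith⟩)
      | exact Or.inl (Or.inr ⟨by linarith, by linarith⟩)
      | exact Or.inr ⟨by linarith, by linarith⟩

theorem mstd_four_intervals_example :
    volume ((Set.Icc (-1/4 : ℝ) (9/4) ∪ Set.Icc (15/4) (21/4)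
              ∪ Set.Icc (35/4) (37/4) ∪ Set.Icc (47/4) (57/4))
            + (Set.Icc (-1/4 : ℝ) (9/4) ∪ Set.Icc (15/4) (21/4)
              ∪ Set.Icc (35/4) (37/4) ∪ Set.Icc (47/4) (57/4)))
      > volume ((Set.Icc (-1/4 : ℝ) (9/4) ∪ Set.Icc (15/4) (21/4)
              ∪ Set.Icc (35/4) (37/4) ∪ Set.Icc (47/4) (57/4))
            - (Set.Icc (-1/4 : ℝ) (9/4) ∪ Set.Icc (15/4) (21/4)
              ∪ Set.Icc (35/4) (37/4) ∪ Set.Icc (47/4) (57/4))) := by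
  show volume (Jset + Jset) > volume (Jset - Jset)
  have hup : volume (Jset - Jset) ≤ ENNReal.ofReal 27 := by
    calc volume (Jset - Jset)
        ≤ volume (Set.Icc (-29/2 : ℝ) (-13/2) ∪ Set.Icc (-11/2) (11/2)
            ∪ Set.Icc (13/2) (29/2)) := measure_mono upper_subset
      _ ≤ volume (Set.Icc (-29/2 : ℝ) (-13/2)) + volume (Set.Icc (-11/2 : ℝ) (11/2))
            + volume (Set.Icc (13/2 : ℝ) (29/2)) := by
          refine le_trans (measure_union_le _ _) ?_
          exact add_le_add (measure_union_le _ _) le_rfl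
      _ = ENNReal.ofReal 27 := by
          rw [Real.volume_Icc, Real.volume_Icc, Real.volume_Icc,
            ← ENNReal.ofReal_add (by norm_num) (by norm_num),
            ← ENNReal.ofReal_add (by norm_num) (by norm_num)]
          norm_num
  have hdisj : Disjoint (Set.Icc (-1/2 : ℝ) (39/2)) (Set.Icc (41/2 : ℝ) (57/2)) := by
    refine Set.disjoint_left.mpr fun x hx hy => ?_
    rcases hx with ⟨_, h2⟩; rcases hy with ⟨h3, _⟩; linarith
  have hlow : ENNReal.ofReal 28 ≤ volume (Jset + Jset) := by
    calc ENNReal.ofReal 28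
        = volume (Set.Icc (-1/2 : ℝ) (39/2) ∪ Set.Icc (41/2) (57/2)) := by
          rw [measure_union hdisj measurableSet_Icc, Real.volume_Icc, Real.volume_Icc,
            ← ENNReal.ofReal_add (by norm_num) (by norm_num)]
          norm_num
      _ ≤ volume (Jset + Jset) := measure_mono lower_subset
  exact lt_of_le_of_lt hup (lt_of_lt_of_le (by simp [ENNReal.ofReal_lt_ofReal_iff]; norm_num) hlow)
end

section
/- Let A be a nonempty finite set of nonnegative integers, let m be an integer with m > 2 · max A, and for t ≥ 1 define A_t = { Σ_{i=0}^{t−1} cᵢ mⁱ : c₀, ..., c_{t−1} ∈ A }, the set of all base-m expansions of length t with digits drawn from A. Then |A_t + A_t| = |A + A|^t and |A_t − A_t| = |A − A|^t. In particular, if A is an MSTD set then so is A_t for every t ≥ 1. -/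
open scoped Pointwise
open Finset

lemma digits_inj (m : ℤ) : ∀ (t : ℕ) (c d : Fin t → ℤ),
    (∀ i, |c i - d i| < m) →
    (∑ i : Fin t, c i * m ^ (i : ℕ)) = (∑ i : Fin t, d i * m ^ (i : ℕ)) → c = d := by
  intro t
  induction t with
  | zero => intro c d _ _; funext i; exact i.elim0
  | succ n ih =>
    intro c d hlt heq
    have hm0 : 0 < m := lt_of_le_of_lt (abs_nonneg _) (hlt 0)
    rw [Fin.sum_univ_succ, Fin.sum_univ_succ] at heq
    have hre : ∀ e : Fin (n+1) → ℤ, (∑ i : Fin n, e i.succ * m ^ (i.succ : ℕ))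
        = m * ∑ i : Fin n, e i.succ * m ^ (i : ℕ) := by
      intro e
      rw [Finset.mul_sum]
      apply Finset.sum_congr rfl
      intro i _
      simp [Fin.val_succ, pow_succ]
      ring
    rw [hre c, hre d] at heq
    simp only [Fin.val_zero, pow_zero, mul_one] at heq
    have h0 : c 0 = d 0 := by
      have hdvd : m ∣ c 0 - d 0 := ⟨(∑ i : Fin n, d i.succ * m ^ (i : ℕ)) - (∑ i : Fin n, c i.succ * m ^ (i : ℕ)), by linarith [heq]⟩
      have := Int.eq_zero_of_abs_lt_dvd hdvd (hlt 0)
      linarith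
    have hs : (∑ i : Fin n, c i.succ * m ^ (i : ℕ)) = ∑ i : Fin n, d i.succ * m ^ (i : ℕ) := by
      have : m * (∑ i : Fin n, c i.succ * m ^ (i : ℕ)) = m * ∑ i : Fin n, d i.succ * m ^ (i : ℕ) := by
        linarith
      exact mul_left_cancel₀ hm0.ne' this
    have htail := ih (fun i => c i.succ) (fun i => d i.succ) (fun i => hlt i.succ) hs
    funext i
    refine Fin.cases h0 (fun j => ?_) i
    exact congrFun htail j

lemma card_image_digits (m : ℤ) (t : ℕ) (B : Finset ℤ)
    (hB : ∀ b₁ ∈ B, ∀ b₂ ∈ B, |b₁ - b₂| < m) :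
    ((Fintype.piFinset (fun _ : Fin t => B)).image
      (fun c => ∑ i : Fin t, c i * m ^ (i : ℕ))).card = B.card ^ t := by
  rw [Finset.card_image_of_injOn, Fintype.card_piFinset]
  · rw [Finset.prod_const, Finset.card_univ, Fintype.card_fin]
  · intro c hc d hd heq
    simp only [Finset.mem_coe, Fintype.mem_piFinset] at hc hd
    exact digits_inj m t c d (fun i => hB _ (hc i) _ (hd i)) heq

lemma At_add (m : ℤ) (t : ℕ) (A : Finset ℤ) :
    ((Fintype.piFinset (fun _ : Fin t => A)).image (fun c => ∑ i : Fin t, c i * m ^ (i:ℕ))) +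
    ((Fintype.piFinset (fun _ : Fin t => A)).image (fun c => ∑ i : Fin t, c i * m ^ (i:ℕ))) =
    (Fintype.piFinset (fun _ : Fin t => A + A)).image (fun c => ∑ i : Fin t, c i * m ^ (i:ℕ)) := by
  ext x
  simp only [Finset.mem_add, Finset.mem_image, Fintype.mem_piFinset]
  constructor
  · rintro ⟨y, ⟨c, hc, rfl⟩, z, ⟨d, hd, rfl⟩, rfl⟩
    exact ⟨c + d, fun i => ⟨c i, hc i, d i, hd i, rfl⟩,
      by simp [add_mul, Finset.sum_add_distrib]⟩
  · rintro ⟨e, he, rfl⟩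
    choose a ha b hb hab using he
    exact ⟨_, ⟨a, ha, rfl⟩, _, ⟨b, hb, rfl⟩, by
      rw [← Finset.sum_add_distrib]
      exact Finset.sum_congr rfl fun i _ => by rw [← hab i]; ring⟩

lemma At_sub (m : ℤ) (t : ℕ) (A : Finset ℤ) :
    ((Fintype.piFinset (fun _ : Fin t => A)).image (fun c => ∑ i : Fin t, c i * m ^ (i:ℕ))) -
    ((Fintype.piFinset (fun _ : Fin t => A)).image (fun c => ∑ i : Fin t, c i * m ^ (i:ℕ))) =
    (Fintype.piFinset (fun _ : Fin t => A - A)).image (fun c => ∑ i : Fin t, c i * m ^ (i:ℕ)) := by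
  ext x
  simp only [Finset.mem_sub, Finset.mem_image, Fintype.mem_piFinset]
  constructor
  · rintro ⟨y, ⟨c, hc, rfl⟩, z, ⟨d, hd, rfl⟩, rfl⟩
    exact ⟨c - d, fun i => ⟨c i, hc i, d i, hd i, rfl⟩,
      by simp [sub_mul, Finset.sum_sub_distrib]⟩
  · rintro ⟨e, he, rfl⟩
    choose a ha b hb hab using he
    exact ⟨_, ⟨a, ha, rfl⟩, _, ⟨b, hb, rfl⟩, by
      rw [← Finset.sum_sub_distrib]
      exact Finset.sum_congr rfl fun i _ => by rw [← hab i]; ring⟩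

theorem base_expansion_mstd (A : Finset ℤ) (hA : A.Nonempty)
    (h0 : ∀ a ∈ A, 0 ≤ a) (m : ℤ) (hm : 2 * A.max' hA < m)
    (t : ℕ) (ht : 1 ≤ t) :
    let At : Finset ℤ :=
      (Fintype.piFinset (fun _ : Fin t => A)).image
        (fun c => ∑ i : Fin t, c i * m ^ (i : ℕ))
    ((At + At).card = (A + A).card ^ t ∧
     (At - At).card = (A - A).card ^ t ∧
     ((A + A).card > (A - A).card → (At + At).card > (At - At).card)) := by
  intro At
  set M := A.max' hA with hMdef
  have hbd : ∀ a ∈ A, 0 ≤ a ∧ a ≤ M := fun a ha => ⟨h0 a ha, A.le_max' a ha⟩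
  have hAdd : ∀ b₁ ∈ A + A, ∀ b₂ ∈ A + A, |b₁ - b₂| < m := by
    intro b₁ h₁ b₂ h₂
    obtain ⟨y, hy, z, hz, rfl⟩ := Finset.mem_add.1 h₁
    obtain ⟨y', hy', z', hz', rfl⟩ := Finset.mem_add.1 h₂
    obtain ⟨hy1, hy2⟩ := hbd y hy; obtain ⟨hz1, hz2⟩ := hbd z hz
    obtain ⟨hy1', hy2'⟩ := hbd y' hy'; obtain ⟨hz1', hz2'⟩ := hbd z' hz'
    rw [abs_sub_lt_iff]; constructor <;> linarith
  have hSub : ∀ b₁ ∈ A - A, ∀ b₂ ∈ A - A, |b₁ - b₂| < m := by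
    intro b₁ h₁ b₂ h₂
    obtain ⟨y, hy, z, hz, rfl⟩ := Finset.mem_sub.1 h₁
    obtain ⟨y', hy', z', hz', rfl⟩ := Finset.mem_sub.1 h₂
    obtain ⟨hy1, hy2⟩ := hbd y hy; obtain ⟨hz1, hz2⟩ := hbd z hz
    obtain ⟨hy1', hy2'⟩ := hbd y' hy'; obtain ⟨hz1', hz2'⟩ := hbd z' hz'
    rw [abs_sub_lt_iff]; constructor <;> linarith
  have h1 : (At + At).card = (A + A).card ^ t := by
    show _ = _
    rw [show At + At = _ from At_add m t A, card_image_digits m t _ hAdd]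
  have h2 : (At - At).card = (A - A).card ^ t := by
    rw [show At - At = _ from At_sub m t A, card_image_digits m t _ hSub]
  exact ⟨h1, h2, fun hgt => by
    rw [h1, h2]; exact Nat.pow_lt_pow_left hgt (by omega)⟩
end
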